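/- arXiv:1709.01236 — 2 statements merged into one kernel-verified Lean document; each statement's English description precedes it below -/
import Mathlib

section
/- (Eigenvectors of the Grover iterate) The vectors ψ₊ = uA + Complex.I • uB and ψ₋ = uA − Complex.I • uB satisfy G ψ₊ = Complex.exp (2*θ*Complex.I) • ψ₊ and G ψ₋ = Complex.exp (−2*θ*Complex.I) • ψ₋; i.e., G has eigenvalues e^{±2iθ} on the plane spanned by uA and uB. -/
/-! With `s = sin θ = √(a/N)` and `c = cos θ`, the uniform state is `h = s • uA + c • uB`, where
`uA, uB` are orthonormal. The oracle `Z_f` negates `uA` and fixes `uB`, so on the plane spanned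
by `uA, uB` the iterate `G` is the rotation by `2θ`: it maps `uA + z • uB` to
`(c + z s)² • (uA + z • uB)` for `z = ±i`, and `(cos θ ± i sin θ)² = e^{±2iθ}`. -/

open scoped InnerProductSpace

open Complex in
theorem exp_two_mul_mul_I (t : ℝ) :
    exp (2 * t * I) = ((Real.cos t : ℂ) + I * (Real.sin t : ℂ)) ^ 2 := by
  rw [ofReal_cos, ofReal_sin, mul_comm I, ← exp_mul_I, ← exp_nat_mul]
  push_cast; ring_nf

theorem sin_arcsin_sqrt_div {a N : ℝ} (ha : 0 ≤ a) (haN : a ≤ N) (hN : 0 < N) :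
    Real.sin (Real.arcsin √(a / N)) = √a / √N := by
  rw [Real.sin_arcsin (by linarith [Real.sqrt_nonneg (a / N)])
    (Real.sqrt_le_one.mpr ((div_le_one hN).mpr haN)), Real.sqrt_div ha]

theorem cos_arcsin_sqrt_div {a N : ℝ} (ha : 0 ≤ a) (hN : 0 < N) :
    Real.cos (Real.arcsin √(a / N)) = √(N - a) / √N := by
  rw [Real.cos_arcsin, Real.sq_sqrt (by positivity), one_sub_div hN.ne', Real.sqrt_div' _ hN.le]

theorem reflection_neg_add_smul {E : Type*} [NormedAddCommGroup E] [InnerProductSpace ℂ E]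
    {u v h : E} (hu : ‖u‖ = 1) (hv : ‖v‖ = 1) (huv : ⟪u, v⟫_ℂ = 0) {s c : ℝ}
    (hsc : s ^ 2 + c ^ 2 = 1) (hh : h = (s : ℂ) • u + (c : ℂ) • v) {z : ℂ} (hz : z ^ 2 = -1) :
    (2 * ⟪h, -u + z • v⟫_ℂ) • h - (-u + z • v) = ((c : ℂ) + z * s) ^ 2 • (u + z • v) := by
  have hinner : ⟪h, -u + z • v⟫_ℂ = -s + z * c := by
    simp only [hh, inner_add_left, inner_add_right, inner_smul_left, inner_smul_right,
      inner_neg_right, Complex.conj_ofReal, inner_self_eq_norm_sq_to_K, hu, hv, huv,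
      inner_eq_zero_symm.mp huv]
    push_cast
    ring
  have hscC : (s : ℂ) ^ 2 + (c : ℂ) ^ 2 = 1 := by exact_mod_cast hsc
  rw [hinner, hh]
  linear_combination (norm := module)
    (-hscC - (s : ℂ) ^ 2 * hz) • u + (z * hscC - (2 * s * c + z * s ^ 2) * hz) • v

theorem norm_eq_one_of_apply_eq_indicator {ι : Type*} [Fintype ι] {S : Finset ι}
    [DecidablePred (· ∈ S)] (hS : S.Nonempty) {u : EuclideanSpace ℂ ι}
    (hu : ∀ x, u x = if x ∈ S then ((1 / √(S.card : ℝ) : ℝ) : ℂ) else 0) :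
    ‖u‖ = 1 := by
  have hcard : (0 : ℝ) < S.card := by exact_mod_cast hS.card_pos
  rw [EuclideanSpace.norm_eq, Real.sqrt_eq_one]
  simp [hu, apply_ite, hcard.le, hcard.ne']

theorem inner_eq_zero_of_apply_eq_zero_or {ι : Type*} [Fintype ι] {u v : EuclideanSpace ℂ ι}
    (huv : ∀ x, u x = 0 ∨ v x = 0) : ⟪u, v⟫_ℂ = 0 :=
  Finset.sum_eq_zero fun x _ => by rcases huv x with h | h <;> simp [h]

theorem grover_iterate_eigenvectors_general
    (N : ℕ) (f : Fin N → Bool)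
    (A : Finset (Fin N)) (hA : A = Finset.univ.filter (fun x => f x = true))
    (a : ℕ) (ha : a = A.card) (ha0 : 0 < a) (haN : a < N)
    (h uA uB : EuclideanSpace ℂ (Fin N))
    (hh : ∀ x, h x = ((1 / Real.sqrt N : ℝ) : ℂ))
    (huA : ∀ x, uA x = if f x then ((1 / Real.sqrt a : ℝ) : ℂ) else 0)
    (huB : ∀ x, uB x = if f x then 0 else ((1 / Real.sqrt ((N : ℝ) - a) : ℝ) : ℂ))
    (θ : ℝ) (hθ : θ = Real.arcsin (Real.sqrt ((a : ℝ) / N)))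
    (Zf Rh G : EuclideanSpace ℂ (Fin N) → EuclideanSpace ℂ (Fin N))
    (hZf : ∀ v x, Zf v x = (if f x then -1 else 1) * v x)
    (hRh : ∀ v, Rh v = (2 * (inner ℂ h v : ℂ)) • h - v)
    (hG : G = Rh ∘ Zf) :
    G (uA + Complex.I • uB)
        = Complex.exp (2 * (θ : ℂ) * Complex.I) • (uA + Complex.I • uB)
      ∧ G (uA - Complex.I • uB)
        = Complex.exp (-(2 * (θ : ℂ) * Complex.I)) • (uA - Complex.I • uB) := by
  have haR : (0 : ℝ) < a := by exact_mod_cast ha0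
  have haNR : (a : ℝ) < N := by exact_mod_cast haN
  have hmemA : ∀ x, x ∈ A ↔ f x = true := by simp [hA]
  have hcardAc : (Aᶜ).card = N - a := by rw [Finset.card_compl, Fintype.card_fin, ← ha]
  have hnormA : ‖uA‖ = 1 :=
    norm_eq_one_of_apply_eq_indicator (Finset.card_pos.mp (ha ▸ ha0)) fun x => by
      simp [huA, hmemA, ← ha]
  have hnormB : ‖uB‖ = 1 :=
    norm_eq_one_of_apply_eq_indicator (S := Aᶜ) (Finset.card_pos.mp (by omega)) fun x => by
      cases hx : f x <;> simp [huB, hmemA, hcardAc, Nat.cast_sub haN.le, hx]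
  have horth : ⟪uA, uB⟫_ℂ = 0 :=
    inner_eq_zero_of_apply_eq_zero_or fun x => by cases hx : f x <;> simp [huA, huB, hx]
  have hdecomp : h = (Real.sin θ : ℂ) • uA + (Real.cos θ : ℂ) • uB := by
    rw [hθ, sin_arcsin_sqrt_div haR.le haNR.le (by linarith),
      cos_arcsin_sqrt_div haR.le (by linarith)]
    have hsa : (√(a : ℝ) : ℂ) ≠ 0 := by simp [ha0.ne']
    have hsb : (√((N : ℝ) - a) : ℂ) ≠ 0 :=
      Complex.ofReal_ne_zero.mpr (Real.sqrt_ne_zero'.mpr (sub_pos.mpr haNR))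
    ext x
    cases hx : f x <;> simp [hh, huA, huB, hx] <;> field_simp
  have hG_eigen : ∀ z : ℂ, z ^ 2 = -1 →
      G (uA + z • uB) = ((Real.cos θ : ℂ) + z * Real.sin θ) ^ 2 • (uA + z • uB) := by
    intro z hz
    have hZ : Zf (uA + z • uB) = -uA + z • uB := by
      ext x
      cases hx : f x <;> simp [hZf, huA, huB, hx]
    rw [hG, Function.comp_apply, hZ, hRh]
    exact reflection_neg_add_smul hnormA hnormB horth (Real.sin_sq_add_cos_sq θ) hdecomp hz
  constructor
  · rw [hG_eigen Complex.I Complex.I_sq, exp_two_mul_mul_I]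
  · rw [sub_eq_add_neg, ← neg_smul, hG_eigen (-Complex.I) (by simp),
      show -(2 * (θ : ℂ) * Complex.I) = 2 * ((-θ : ℝ) : ℂ) * Complex.I by push_cast; ring,
      exp_two_mul_mul_I, Real.cos_neg, Real.sin_neg]
    push_cast
    ring_nf

/-- Eigenvectors of the Grover iterate: `ψ± = uA ± i·uB` are eigenvectors of
`G` with eigenvalues `e^{±2iθ}`. -/
theorem grover_iterate_eigenvectors
    (N : ℕ) (hN : 1 ≤ N) (f : Fin N → Bool)
    (A : Finset (Fin N)) (hA : A = Finset.univ.filter (fun x => f x = true))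
    (a : ℕ) (ha : a = A.card) (ha0 : 0 < a) (haN : a < N)
    (h uA uB : EuclideanSpace ℂ (Fin N))
    (hh : ∀ x, h x = ((1 / Real.sqrt N : ℝ) : ℂ))
    (huA : ∀ x, uA x = if f x then ((1 / Real.sqrt a : ℝ) : ℂ) else 0)
    (huB : ∀ x, uB x = if f x then 0 else ((1 / Real.sqrt ((N : ℝ) - a) : ℝ) : ℂ))
    (θ : ℝ) (hθ : θ = Real.arcsin (Real.sqrt ((a : ℝ) / N)))
    (Zf Rh G : EuclideanSpace ℂ (Fin N) → EuclideanSpace ℂ (Fin N))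
    (hZf : ∀ v x, Zf v x = (if f x then -1 else 1) * v x)
    (hRh : ∀ v, Rh v = (2 * (inner ℂ h v : ℂ)) • h - v)
    (hG : G = Rh ∘ Zf) :
    G (uA + Complex.I • uB)
        = Complex.exp (2 * (θ : ℂ) * Complex.I) • (uA + Complex.I • uB)
      ∧ G (uA - Complex.I • uB)
        = Complex.exp (-(2 * (θ : ℂ) * Complex.I)) • (uA - Complex.I • uB) :=
  grover_iterate_eigenvectors_general N f A hA a ha ha0 haN h uA uB hh huA huB θ hθ Zf Rh G hZf hRh
    hG
end

section
/- (Theorem 2, optimality of Grover's algorithm) Suppose that for every r : Fin N the algorithm finds the marked item with probability at least 1/2, i.e., ‖Π_r (ψ_r^(k))‖² ≥ 1/2 for all r. Then the number of queries satisfies 1 + 2*k ≥ √(N/2); in particular k = Ω(√N). -/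
/-! The hybrid argument of Bennett, Bernstein, Brassard and Vazirani. Since the `U_j` and the
oracles are isometries, replacing the oracle calls by the identity one at a time costs
`‖O_r φ^(i) - φ^(i)‖ = 2 ‖Π_r φ^(i)‖` per call, so `‖ψ_r^(k) - φ^(k)‖ ≤ 2 ∑_{i<k} ‖Π_r φ^(i)‖`.
Success on `r` then forces `√(1/2) ≤ ‖Π_r φ^(k)‖ + 2 ∑_{i<k} ‖Π_r φ^(i)‖`, while by Cauchy–Schwarz
`∑_r ‖Π_r φ‖ ≤ √N` for every unit vector `φ`. Summing over `r` gives `N / √2 ≤ (1 + 2k) √N`. -/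

open Finset

section BlockProjection

variable {𝕜 : Type*} [RCLike 𝕜] {ι W : Type*} [DecidableEq ι]

def blockProj (r : ι) : EuclideanSpace 𝕜 (ι × W) →ₗ[𝕜] EuclideanSpace 𝕜 (ι × W) where
  toFun v := WithLp.toLp 2 fun x => if x.1 = r then v x else 0
  map_add' _ _ := by ext x; by_cases x.1 = r <;> simp [*]
  map_smul' _ _ := by ext x; by_cases x.1 = r <;> simp [*]

@[simp]
lemma blockProj_apply (r : ι) (v : EuclideanSpace 𝕜 (ι × W)) (x : ι × W) :
    blockProj r v x = if x.1 = r then v x else 0 := rfl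

def phaseOracle (r : ι) : EuclideanSpace 𝕜 (ι × W) →ₗ[𝕜] EuclideanSpace 𝕜 (ι × W) :=
  LinearMap.id - (2 : 𝕜) • blockProj r

lemma phaseOracle_apply (r : ι) (v : EuclideanSpace 𝕜 (ι × W)) :
    phaseOracle r v = v - (2 : 𝕜) • blockProj r v := rfl

variable [Fintype ι] [Fintype W]

lemma norm_phaseOracle (r : ι) (v : EuclideanSpace 𝕜 (ι × W)) : ‖phaseOracle r v‖ = ‖v‖ := by
  rw [EuclideanSpace.norm_eq, EuclideanSpace.norm_eq]
  congr 1
  refine sum_congr rfl fun x _ => ?_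
  by_cases hx : x.1 = r
  · simp [phaseOracle_apply, hx, two_mul]
  · simp [phaseOracle_apply, hx]

lemma isometry_phaseOracle (r : ι) : Isometry (phaseOracle r : EuclideanSpace 𝕜 (ι × W) → _) :=
  AddMonoidHomClass.isometry_of_norm _ (norm_phaseOracle r)

lemma dist_phaseOracle_self (r : ι) (v : EuclideanSpace 𝕜 (ι × W)) :
    dist (phaseOracle r v) v = 2 * ‖blockProj r v‖ := by
  simp [phaseOracle_apply, norm_smul]

lemma sum_norm_blockProj_sq (v : EuclideanSpace 𝕜 (ι × W)) :
    ∑ r, ‖blockProj r v‖ ^ 2 = ‖v‖ ^ 2 := by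
  simp_rw [EuclideanSpace.norm_sq_eq, blockProj_apply, apply_ite (‖·‖ ^ 2)]
  rw [sum_comm]
  simp

lemma norm_blockProj_le (r : ι) (v : EuclideanSpace 𝕜 (ι × W)) : ‖blockProj r v‖ ≤ ‖v‖ := by
  refine (pow_le_pow_iff_left₀ (norm_nonneg _) (norm_nonneg _) two_ne_zero).1 ?_
  rw [← sum_norm_blockProj_sq v]
  exact single_le_sum (f := fun r => ‖blockProj r v‖ ^ 2) (fun _ _ => by positivity) (mem_univ r)

lemma sum_norm_blockProj_le (v : EuclideanSpace 𝕜 (ι × W)) :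
    ∑ r, ‖blockProj r v‖ ≤ √(Fintype.card ι) * ‖v‖ := by
  rw [← Real.sqrt_sq (norm_nonneg v), ← Real.sqrt_mul (Nat.cast_nonneg _), ← sum_norm_blockProj_sq]
  exact Real.le_sqrt_of_sq_le
    (by simpa only [card_univ] using sq_sum_le_card_mul_sum_sq (s := univ) (f := (‖blockProj · v‖)))

lemma sum_norm_blockProj_add_two_mul_sum_le {φ : ℕ → EuclideanSpace 𝕜 (ι × W)}
    (hφ : ∀ j, ‖φ j‖ ≤ 1) (k : ℕ) :
    ∑ r, (‖blockProj r (φ k)‖ + 2 * ∑ i ∈ range k, ‖blockProj r (φ i)‖) ≤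
      √(Fintype.card ι) * (1 + 2 * k) := by
  have query_mass (j : ℕ) : ∑ r, ‖blockProj r (φ j)‖ ≤ √(Fintype.card ι) :=
    (sum_norm_blockProj_le _).trans (mul_le_of_le_one_right (Real.sqrt_nonneg _) (hφ j))
  calc ∑ r, (‖blockProj r (φ k)‖ + 2 * ∑ i ∈ range k, ‖blockProj r (φ i)‖)
      = ∑ r, ‖blockProj r (φ k)‖ + 2 * ∑ i ∈ range k, ∑ r, ‖blockProj r (φ i)‖ := by
        rw [sum_add_distrib, ← mul_sum, sum_comm]
    _ ≤ √(Fintype.card ι) + 2 * ∑ i ∈ range k, √(Fintype.card ι) := by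
        gcongr with i <;> apply query_mass
    _ = √(Fintype.card ι) * (1 + 2 * k) := by rw [sum_const, card_range, nsmul_eq_mul]; ring

end BlockProjection

lemma sqrt_div_two_le_of_mul_sqrt_le {n c : ℝ} (hn : 0 < n) (h : n * √(1 / 2) ≤ √n * c) :
    √(n / 2) ≤ c := by
  rw [div_eq_mul_one_div, Real.sqrt_mul hn.le]
  refine le_of_mul_le_mul_left ?_ (Real.sqrt_pos.2 hn)
  rwa [← mul_assoc, Real.mul_self_sqrt hn.le]

theorem dist_le_sum_dist_of_isometry {X : Type*} [PseudoMetricSpace X] {O : X → X}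
    (hO : Isometry O) {U : ℕ → X → X} (hU : ∀ j, Isometry (U j)) {ψ φ : ℕ → X}
    (h0 : ψ 0 = φ 0) (hψ : ∀ j, ψ (j + 1) = U (j + 1) (O (ψ j)))
    (hφ : ∀ j, φ (j + 1) = U (j + 1) (φ j)) (j : ℕ) :
    dist (ψ j) (φ j) ≤ ∑ i ∈ range j, dist (O (φ i)) (φ i) := by
  induction j with
  | zero => simp [h0]
  | succ j ih =>
    calc dist (ψ (j + 1)) (φ (j + 1)) = dist (O (ψ j)) (φ j) := by
          rw [hψ, hφ, (hU _).dist_eq]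
      _ ≤ dist (O (ψ j)) (O (φ j)) + dist (O (φ j)) (φ j) := dist_triangle _ _ _
      _ ≤ _ := by rw [hO.dist_eq, sum_range_succ]; gcongr

theorem grover_optimality_general
    (N : ℕ) (hN : 1 ≤ N) (W : Type) [Fintype W]
    (Pr : Fin N → EuclideanSpace ℂ (Fin N × W) → EuclideanSpace ℂ (Fin N × W))
    (hPr : ∀ r v x, Pr r v x = if x.1 = r then v x else 0)
    (Or : Fin N → EuclideanSpace ℂ (Fin N × W) → EuclideanSpace ℂ (Fin N × W))
    (hOr : ∀ r v, Or r v = v - (2 : ℂ) • Pr r v)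
    (k : ℕ)
    (U : ℕ → EuclideanSpace ℂ (Fin N × W) ≃ₗᵢ[ℂ] EuclideanSpace ℂ (Fin N × W))
    (v₀ : EuclideanSpace ℂ (Fin N × W)) (hv₀ : ‖v₀‖ = 1)
    (ψ : Fin N → ℕ → EuclideanSpace ℂ (Fin N × W))
    (hψ0 : ∀ r, ψ r 0 = U 0 v₀)
    (hψ : ∀ r j, ψ r (j + 1) = U (j + 1) (Or r (ψ r j)))
    (φ : ℕ → EuclideanSpace ℂ (Fin N × W))
    (hφ0 : φ 0 = U 0 v₀)
    (hφ : ∀ j, φ (j + 1) = U (j + 1) (φ j))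
    (hsucc : ∀ r : Fin N, ‖Pr r (ψ r k)‖ ^ 2 ≥ 1 / 2) :
    (1 : ℝ) + 2 * (k : ℝ) ≥ Real.sqrt ((N : ℝ) / 2) := by
  obtain rfl : Pr = fun r v => blockProj r v := funext₂ fun r v => by ext x; simp [hPr]
  obtain rfl : Or = fun r v => phaseOracle r v := funext₂ hOr
  have norm_φ (j : ℕ) : ‖φ j‖ = 1 := by
    induction j with
    | zero => simp [hφ0, hv₀]
    | succ j ih => simp [hφ, ih]
  have hybrid (r : Fin N) : ‖ψ r k - φ k‖ ≤ 2 * ∑ i ∈ range k, ‖blockProj r (φ i)‖ := by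
    rw [← dist_eq_norm, mul_sum]
    simp_rw [← dist_phaseOracle_self]
    exact dist_le_sum_dist_of_isometry (isometry_phaseOracle r) (fun j => (U j).isometry)
      ((hψ0 r).trans hφ0.symm) (hψ r) hφ k
  have success_le (r : Fin N) :
      √(1 / 2) ≤ ‖blockProj r (φ k)‖ + 2 * ∑ i ∈ range k, ‖blockProj r (φ i)‖ :=
    calc √(1 / 2) ≤ ‖blockProj r (ψ r k)‖ := (Real.sqrt_le_left (norm_nonneg _)).2 (hsucc r)
      _ ≤ ‖blockProj r (φ k)‖ + ‖blockProj r (ψ r k - φ k)‖ := by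
        rw [map_sub]; exact norm_le_norm_add_norm_sub' _ _
      _ ≤ _ := by grw [norm_blockProj_le r (ψ r k - φ k), hybrid r]
  refine sqrt_div_two_le_of_mul_sqrt_le (by exact_mod_cast hN) ?_
  calc N * √(1 / 2) = ∑ r : Fin N, √(1 / 2) := by simp
    _ ≤ ∑ r, (‖blockProj r (φ k)‖ + 2 * ∑ i ∈ range k, ‖blockProj r (φ i)‖) :=
      sum_le_sum fun r _ => success_le r
    _ ≤ √N * (1 + 2 * k) := by
      simpa only [Fintype.card_fin] using
        sum_norm_blockProj_add_two_mul_sum_le (fun j => (norm_φ j).le) k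

/-- Theorem 2 (optimality of Grover's algorithm): if a `k`-query algorithm
finds the marked item with probability at least `1/2` for every `r`, then
`1 + 2k ≥ √(N/2)`; in particular `k = Ω(√N)`. -/
theorem grover_optimality
    (N : ℕ) (hN : 1 ≤ N) (W : Type) [Fintype W] [Nonempty W]
    (Pr : Fin N → EuclideanSpace ℂ (Fin N × W) → EuclideanSpace ℂ (Fin N × W))
    (hPr : ∀ r v x, Pr r v x = if x.1 = r then v x else 0)
    (Or : Fin N → EuclideanSpace ℂ (Fin N × W) → EuclideanSpace ℂ (Fin N × W))
    (hOr : ∀ r v, Or r v = v - (2 : ℂ) • Pr r v)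
    (k : ℕ)
    (U : ℕ → EuclideanSpace ℂ (Fin N × W) ≃ₗᵢ[ℂ] EuclideanSpace ℂ (Fin N × W))
    (v₀ : EuclideanSpace ℂ (Fin N × W)) (hv₀ : ‖v₀‖ = 1)
    (ψ : Fin N → ℕ → EuclideanSpace ℂ (Fin N × W))
    (hψ0 : ∀ r, ψ r 0 = U 0 v₀)
    (hψ : ∀ r j, ψ r (j + 1) = U (j + 1) (Or r (ψ r j)))
    (φ : ℕ → EuclideanSpace ℂ (Fin N × W))
    (hφ0 : φ 0 = U 0 v₀)
    (hφ : ∀ j, φ (j + 1) = U (j + 1) (φ j))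
    (hsucc : ∀ r : Fin N, ‖Pr r (ψ r k)‖ ^ 2 ≥ 1 / 2) :
    (1 : ℝ) + 2 * (k : ℝ) ≥ Real.sqrt ((N : ℝ) / 2) :=
  grover_optimality_general N hN W Pr hPr Or hOr k U v₀ hv₀ ψ hψ0 hψ φ hφ0 hφ hsucc
end
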